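/- arXiv:math/9505207 — 5 statements merged into one kernel-verified Lean document; each statement's English description precedes it below -/
import Mathlib

section
/- Let q ≥ 2 be an integer and let P be a polynomial over ℂ of degree q+1 satisfying: (1) the derivative P′ has exactly two roots, namely −q, which is a root of P′ of multiplicity q−1, and one further point ω ∈ ℂ with ω ≠ −q, which is a simple root of P′; (2) P(0) = 0; (3) P(−q) = 0. Then there exists λ ∈ ℂ with λ ≠ 0 such that P(z) = λ·z·(1+z/q)^q for all z ∈ ℂ. -/
open Polynomial

/-! A root of `P` at which `P′` vanishes to order `q - 1` is a root of `P` of order `q`, so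
`P` is divisible by `z (z + q)^q`, which has the same degree `q + 1` as `P`. -/

namespace Polynomial

theorem pow_rootMultiplicity_derivative_add_one_dvd {R : Type*} [CommRing R] [IsDomain R]
    [CharZero R] {P : R[X]} {a : R} (ha : P.IsRoot a) :
    (X - C a) ^ (P.derivative.rootMultiplicity a + 1) ∣ P := by
  rcases eq_or_ne P 0 with rfl | hP
  · exact dvd_zero _
  have hpos : 0 < P.rootMultiplicity a := (rootMultiplicity_pos hP).mpr ha
  rw [derivative_rootMultiplicity_of_root ha, Nat.sub_add_cancel hpos]
  exact pow_rootMultiplicity_dvd P a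

theorem exists_eq_C_mul_X_sub_C_mul_X_sub_C_pow {K : Type*} [Field K] {P : K[X]} {a b : K}
    {n : ℕ} (hab : a ≠ b) (hdeg : P.degree = (n + 1 : ℕ)) (hb : P.IsRoot b)
    (ha : (X - C a) ^ n ∣ P) :
    ∃ c ≠ 0, P = C c * ((X - C b) * (X - C a) ^ n) := by
  have hP : P ≠ 0 := ne_zero_of_degree_gt (n := ⊥) (by rw [hdeg]; exact WithBot.bot_lt_coe _)
  have hcoprime : IsCoprime (X - C b) ((X - C a) ^ n) :=
    (isCoprime_X_sub_C_of_isUnit_sub (sub_ne_zero_of_ne hab.symm).isUnit).pow_right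
  have hmonic : ((X - C b) * (X - C a) ^ n).Monic :=
    (monic_X_sub_C b).mul ((monic_X_sub_C a).pow n)
  have hdvd := hcoprime.mul_dvd (dvd_iff_isRoot.mpr hb) ha
  refine ⟨P.leadingCoeff, leadingCoeff_ne_zero.mpr hP,
    eq_leadingCoeff_mul_of_monic_of_dvd_of_natDegree_le hmonic hdvd ?_⟩
  rw [natDegree_eq_of_degree_eq_some hdeg, (monic_X_sub_C b).natDegree_mul
    ((monic_X_sub_C a).pow n), natDegree_X_sub_C, natDegree_pow, natDegree_X_sub_C]
  omega

end Polynomial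

theorem stmt1_general (q : ℕ) (hq : 2 ≤ q) (P : Polynomial ℂ)
    (hdeg : P.degree = (q + 1 : ℕ))
    (hmult₁ : (derivative P).rootMultiplicity (-(q : ℂ)) = q - 1)
    (h0 : P.eval 0 = 0)
    (hq0 : P.eval (-(q : ℂ)) = 0) :
    ∃ lam : ℂ, lam ≠ 0 ∧ ∀ z : ℂ, P.eval z = lam * z * (1 + z / (q : ℂ)) ^ q := by
  have hqc : (q : ℂ) ≠ 0 := Nat.cast_ne_zero.mpr (by omega)
  have hdvd : (X - C (-(q : ℂ))) ^ q ∣ P := by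
    simpa only [hmult₁, Nat.sub_add_cancel (by omega : 1 ≤ q)] using
      pow_rootMultiplicity_derivative_add_one_dvd (P := P) hq0
  obtain ⟨c, hc, hP⟩ := exists_eq_C_mul_X_sub_C_mul_X_sub_C_pow
    (neg_ne_zero.mpr hqc) hdeg h0 hdvd
  refine ⟨c * (q : ℂ) ^ q, mul_ne_zero hc (pow_ne_zero q hqc), fun z => ?_⟩
  rw [hP]
  have hrescale : 1 + z / (q : ℂ) = (z + q) / q := by field_simp; ring
  simp only [eval_mul, eval_C, eval_pow, eval_sub, eval_X, sub_zero, sub_neg_eq_add, hrescale,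
    div_pow]
  field_simp

/-- Any polynomial of degree `q+1` (with `q ≥ 2`) of type `E_q` — i.e. whose derivative has
exactly two roots, namely `-q` of multiplicity `q-1` and a further simple root `ω ≠ -q`,
and which vanishes at `0` and at `-q` — is of the form `λ·z·(1+z/q)^q` for some `λ ≠ 0`. -/
theorem stmt1 (q : ℕ) (hq : 2 ≤ q) (P : Polynomial ℂ) (ω : ℂ)
    (hdeg : P.degree = (q + 1 : ℕ))
    (hω : ω ≠ -(q : ℂ))
    (hroots : ∀ z : ℂ, (derivative P).IsRoot z ↔ z = -(q : ℂ) ∨ z = ω)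
    (hmult₁ : (derivative P).rootMultiplicity (-(q : ℂ)) = q - 1)
    (hmult₂ : (derivative P).rootMultiplicity ω = 1)
    (h0 : P.eval 0 = 0)
    (hq0 : P.eval (-(q : ℂ)) = 0) :
    ∃ lam : ℂ, lam ≠ 0 ∧ ∀ z : ℂ, P.eval z = lam * z * (1 + z / (q : ℂ)) ^ q :=
  stmt1_general q hq P hdeg hmult₁ h0 hq0
end

section
/- Let q ≥ 3 be an integer and let λ, λ′ ∈ ℂ with λ ≠ 0 and λ′ ≠ 0. Suppose there exist a, b ∈ ℂ with a ≠ 0 such that the affine map A(z) = a·z + b conjugates P_{q,λ} to P_{q,λ′}, i.e. A(P_{q,λ}(z)) = P_{q,λ′}(A(z)) for all z ∈ ℂ. Then λ = λ′ (indeed A is the identity, i.e. a = 1 and b = 0). -/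
/-!
Differentiating the conjugacy `A ∘ P_{q,λ} = P_{q,λ'} ∘ A` gives `P_{q,λ}' = P_{q,λ'}' ∘ A`, so `A`
maps the critical points of `P_{q,λ}` onto those of `P_{q,λ'}`, with multiplicities. Both
polynomials have the same critical points: `-q` of multiplicity `q - 1 ≥ 2` and `-q/(q+1)`,
which is simple. Hence `A` fixes two distinct points and is the identity, and evaluating the
conjugacy at `z = q` gives `λ = λ'`.
-/

open Polynomial

theorem Multiset.eq_and_eq_of_nsmul_singleton_add_singleton_eq {α : Type*} {r s x y : α}
    (hrs : r ≠ s) {n : ℕ} (hn : 2 ≤ n) (h : n • {x} + {y} = (n • {r} + {s} : Multiset α)) :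
    x = r ∧ y = s := by
  classical
  have hr := congrArg (Multiset.count r) h
  have hs := congrArg (Multiset.count s) h
  simp only [Multiset.count_add, Multiset.count_nsmul, Multiset.count_singleton] at hr hs
  constructor
  · by_contra hxr
    split_ifs at hr <;> grind
  · grind

theorem derivative_X_mul_X_add_C_pow {R : Type*} [CommRing R] (c : R) {q : ℕ} (hq : 0 < q) :
    derivative (X * (X + C c) ^ q) = (X + C c) ^ (q - 1) * (C ((q : R) + 1) * X + C c) := by
  obtain ⟨n, rfl⟩ : ∃ n, q = n + 1 := ⟨q - 1, by omega⟩
  simp only [derivative_mul, derivative_pow, derivative_X, derivative_C, map_add, map_natCast,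
    map_one]
  push_cast
  ring

section Domain

variable {R : Type*} [CommRing R] [IsDomain R]

theorem derivative_eq_comp_of_conj {f g : R[X]} {a b : R} (ha : a ≠ 0)
    (h : C a * f + C b = g.comp (C a * X + C b)) :
    derivative f = (derivative g).comp (C a * X + C b) := by
  have := congrArg derivative h
  simp only [derivative_add, derivative_C_mul, derivative_C, add_zero, derivative_comp,
    derivative_X, mul_one] at this
  exact mul_left_cancel₀ (C_ne_zero.mpr ha) this

theorem eq_one_and_eq_zero_of_two_fixedPoints {a b r s : R} (hrs : r ≠ s) (hr : a * r + b = r)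
    (hs : a * s + b = s) : a = 1 ∧ b = 0 := by
  have ha : a = 1 := by
    have : (a - 1) * (r - s) = 0 := by linear_combination hr - hs
    simpa [sub_eq_zero, hrs] using this
  subst ha
  exact ⟨rfl, by linear_combination hr⟩

end Domain

section Field

variable {K : Type*} [Field K]

theorem roots_C_mul_X_add_C_pow_mul_C_mul_X_add_C {k u : K} (hk : k ≠ 0) (hu : u ≠ 0)
    (c v : K) (n : ℕ) :
    (C k * (X + C c) ^ n * (C u * X + C v)).roots = n • {-c} + {-(u⁻¹ * v)} := by
  have hlin : C u * X + C v ≠ 0 := fun h => by simpa [h] using degree_linear (b := v) hu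
  have h0 : C k * (X + C c) ^ n * (C u * X + C v) ≠ 0 := by simp [hk, X_add_C_ne_zero, hlin]
  rw [roots_mul h0, roots_C_mul _ hk, roots_pow, roots_X_add_C, roots_C_mul_X_add_C _ hu]

noncomputable def P (q : ℕ) (lam : K) : K[X] := C lam * X * (1 + C (q : K)⁻¹ * X) ^ q

@[simp]
theorem eval_P (q : ℕ) (lam z : K) : (P q lam).eval z = lam * z * (1 + z / q) ^ q := by
  simp [P, div_eq_inv_mul]

theorem P_eq_C_mul_X_mul_X_add_C_pow {q : ℕ} (hq : (q : K) ≠ 0) (lam : K) :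
    P q lam = C (lam / q ^ q) * (X * (X + C (q : K)) ^ q) := by
  have : 1 + C (q : K)⁻¹ * X = C (q : K)⁻¹ * (X + C (q : K)) := by
    rw [mul_add, ← C_mul, inv_mul_cancel₀ hq, C_1, add_comm]
  rw [P, this, mul_pow, ← C_pow, div_eq_mul_inv, ← inv_pow, C_mul]
  ring

theorem roots_derivative_P [CharZero K] {q : ℕ} (hq : 0 < q) {lam : K} (hlam : lam ≠ 0) :
    (derivative (P q lam)).roots = (q - 1) • {-(q : K)} + {-(((q : K) + 1)⁻¹ * q)} := by
  have hq0 : (q : K) ≠ 0 := by exact_mod_cast hq.ne'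
  have hq1 : (q : K) + 1 ≠ 0 := by exact_mod_cast q.succ_ne_zero
  rw [P_eq_C_mul_X_mul_X_add_C_pow hq0, derivative_C_mul, derivative_X_mul_X_add_C_pow _ hq,
    ← mul_assoc, roots_C_mul_X_add_C_pow_mul_C_mul_X_add_C (by simp [hlam, hq0]) hq1]

end Field

/-- For `q ≥ 3`, if an affine map `A(z) = a·z + b` (with `a ≠ 0`) conjugates
`P_{q,λ}(z) = λ·z·(1+z/q)^q` to `P_{q,λ'}`, then `λ = λ'` and `A` is the identity. -/
theorem stmt2 (q : ℕ) (hq : 3 ≤ q) (lam lam' : ℂ) (hlam : lam ≠ 0) (hlam' : lam' ≠ 0)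
    (a b : ℂ) (ha : a ≠ 0)
    (hconj : ∀ z : ℂ,
      a * (lam * z * (1 + z / (q : ℂ)) ^ q) + b
        = lam' * (a * z + b) * (1 + (a * z + b) / (q : ℂ)) ^ q) :
    lam = lam' ∧ a = 1 ∧ b = 0 := by
  have hq0 : (q : ℂ) ≠ 0 := by exact_mod_cast (show q ≠ 0 by omega)
  have hpoly : C a * P q lam + C b = (P q lam').comp (C a * X + C b) :=
    Polynomial.funext fun z => by simpa using hconj z
  have hcrit := congrArg (fun p : ℂ[X] => p.roots.map (fun x => a * x + b))
    (derivative_eq_comp_of_conj ha hpoly)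
  simp only [map_roots_comp_C_mul_X_add_C _ _ _ (isUnit_iff_ne_zero.mpr ha),
    roots_derivative_P (by omega : 0 < q) hlam, roots_derivative_P (by omega : 0 < q) hlam',
    Multiset.map_add, Multiset.map_nsmul, Multiset.map_singleton] at hcrit
  have hdistinct : -(q : ℂ) ≠ -(((q : ℂ) + 1)⁻¹ * q) := by
    rw [ne_eq, neg_inj, eq_comm, inv_mul_eq_iff_eq_mul₀ (by exact_mod_cast q.succ_ne_zero)]
    intro h
    exact hq0 (mul_self_eq_zero.mp (by linear_combination -h))
  obtain ⟨hr, hs⟩ :=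
    Multiset.eq_and_eq_of_nsmul_singleton_add_singleton_eq hdistinct (by omega) hcrit
  obtain ⟨rfl, rfl⟩ := eq_one_and_eq_zero_of_two_fixedPoints hdistinct hr hs
  refine ⟨?_, rfl, rfl⟩
  have heval := hconj q
  simp only [div_self hq0, one_mul, add_zero] at heval
  exact mul_right_cancel₀ hq0 (mul_right_cancel₀ (by norm_num) heval)
end

section
/- Fix an integer q ≥ 1, a real number η > 0, and a real number s with 0 < s < 1/(2η(2^q − 1)). For n ∈ ℕ and θ ∈ ℝ let S_n^s(θ) = {(ρ,t) ∈ ℝ² : 0 ≤ ρ ≤ η/2^n and |t − θ| ≤ s·ρ}. Then the truncated sectors S_n^s(m/(2^n(2^q−1))) indexed by pairs (n,m) with n ∈ ℕ and m ∈ ℤ odd are pairwise disjoint: if (n,m) ≠ (n′,m′) with m and m′ odd integers, then S_n^s(m/(2^n(2^q−1))) and S_{n′}^s(m′/(2^{n′}(2^q−1))) are disjoint. -/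
/-!
Two points of the centre line at distance `d` have disjoint sectors of slope `s` truncated at
height `h` as soon as `2 s h < d`, since a common point `(ρ, t)` would give `d ≤ 2 s ρ`.
Two centres `m / 2^n` and `m' / 2^n'` with `m'` odd and `n ≤ n'` differ by at least `1 / 2^n'`:
their difference is `(m 2^(n'-n) - m') / 2^n'`, and the numerator is odd when `n < n'`.
After dividing by `2^q - 1`, the bound on `s` is exactly what makes `2 s η / 2^n'` smaller than
this gap.
-/

open Set

def truncSector (h s θ : ℝ) : Set (ℝ × ℝ) :=
  {p | 0 ≤ p.1 ∧ p.1 ≤ h ∧ |p.2 - θ| ≤ s * p.1}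

lemma abs_sub_le_of_mem_truncSector {h h' s θ θ' : ℝ} {p : ℝ × ℝ}
    (hp : p ∈ truncSector h s θ) (hp' : p ∈ truncSector h' s θ') :
    |θ - θ'| ≤ 2 * s * p.1 :=
  calc |θ - θ'| = |(p.2 - θ') - (p.2 - θ)| := by ring_nf
    _ ≤ |p.2 - θ'| + |p.2 - θ| := abs_sub _ _
    _ ≤ s * p.1 + s * p.1 := add_le_add hp'.2.2 hp.2.2
    _ = 2 * s * p.1 := by ring

lemma disjoint_truncSector_of_lt_abs_sub {h h' s θ θ' : ℝ} (hs : 0 ≤ s)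
    (hθ : 2 * s * h' < |θ - θ'|) :
    Disjoint (truncSector h s θ) (truncSector h' s θ') := by
  refine disjoint_left.mpr fun p hp hp' => hθ.not_ge ?_
  calc 2 * s * h' ≥ 2 * s * p.1 := by gcongr; exact hp'.2.1
    _ ≥ |θ - θ'| := abs_sub_le_of_mem_truncSector hp hp'

lemma Int.mul_two_pow_sub_ne_of_odd {n n' : ℕ} {m m' : ℤ} (hnn : n ≤ n')
    (hm' : Odd m') (hne : (n, m) ≠ (n', m')) :
    m * 2 ^ (n' - n) ≠ m' := by
  rcases hnn.eq_or_lt with rfl | hlt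
  · simpa using fun h : m = m' => hne (by rw [h])
  · have hev : Even (m * 2 ^ (n' - n)) :=
      (Int.even_pow.mpr ⟨even_two, by omega⟩).mul_left m
    rintro h
    exact Int.not_even_iff_odd.mpr hm' (h ▸ hev)

lemma one_div_two_pow_le_abs_sub_of_odd {n n' : ℕ} {m m' : ℤ} (hnn : n ≤ n')
    (hm' : Odd m') (hne : (n, m) ≠ (n', m')) :
    1 / (2 : ℝ) ^ n' ≤ |(m : ℝ) / 2 ^ n - m' / 2 ^ n'| := by
  have hnum : (1 : ℝ) ≤ |((m * 2 ^ (n' - n) - m' : ℤ) : ℝ)| := by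
    rw [← Int.cast_abs]
    exact_mod_cast Int.one_le_abs <|
      sub_ne_zero.mpr (Int.mul_two_pow_sub_ne_of_odd hnn hm' hne)
  have hdiff :
      (m : ℝ) / 2 ^ n - m' / 2 ^ n' = ((m * 2 ^ (n' - n) - m' : ℤ) : ℝ) / 2 ^ n' := by
    rw [← Nat.add_sub_of_le hnn, pow_add]
    push_cast
    field_simp
    simp
  rw [hdiff, abs_div, abs_of_pos (by positivity : (0 : ℝ) < 2 ^ n')]
  gcongr

/-- For fixed `q ≥ 1`, `η > 0` and slope `0 < s < 1/(2η(2^q - 1))`, the truncated sectors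
`S_n^s(m/(2^n(2^q-1)))` indexed by pairs `(n,m)` with `n ∈ ℕ` and `m ∈ ℤ` odd are
pairwise disjoint. -/
theorem stmt6 (q : ℕ) (hq : 1 ≤ q) (η s : ℝ) (hη : 0 < η)
    (hs : 0 < s) (hs' : s < 1 / (2 * η * ((2 : ℝ) ^ q - 1)))
    (n n' : ℕ) (m m' : ℤ) (hm : Odd m) (hm' : Odd m')
    (hne : (n, m) ≠ (n', m')) :
    Disjoint
      {p : ℝ × ℝ | 0 ≤ p.1 ∧ p.1 ≤ η / 2 ^ n ∧
        |p.2 - (m : ℝ) / (2 ^ n * ((2 : ℝ) ^ q - 1))| ≤ s * p.1}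
      {p : ℝ × ℝ | 0 ≤ p.1 ∧ p.1 ≤ η / 2 ^ n' ∧
        |p.2 - (m' : ℝ) / (2 ^ n' * ((2 : ℝ) ^ q - 1))| ≤ s * p.1} := by
  wlog hnn : n ≤ n' generalizing n n' m m'
  · exact (this n' n m' m hm' hm hne.symm (le_of_not_ge hnn)).symm
  set D : ℝ := 2 ^ q - 1
  have hD : 0 < D := by
    have : (2 : ℝ) ^ 1 ≤ 2 ^ q := pow_le_pow_right₀ one_le_two hq
    simp only [D]; linarith
  have hsηD : 2 * s * η * D < 1 := by
    have := (lt_div_iff₀ (by positivity)).mp hs'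
    linarith
  refine disjoint_truncSector_of_lt_abs_sub hs.le ?_
  calc 2 * s * (η / 2 ^ n') < 1 / 2 ^ n' / D := by
        rw [lt_div_iff₀ hD]
        calc 2 * s * (η / 2 ^ n') * D = 2 * s * η * D / 2 ^ n' := by ring
          _ < 1 / 2 ^ n' := by gcongr
    _ ≤ |(m : ℝ) / 2 ^ n - m' / 2 ^ n'| / D := by
        gcongr; exact one_div_two_pow_le_abs_sub_of_odd hnn hm' hne
    _ = |(m : ℝ) / (2 ^ n * D) - m' / (2 ^ n' * D)| := by
        rw [← abs_of_pos hD, ← abs_div, abs_of_pos hD, sub_div, div_div, div_div]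
end

section
/- Let d ≥ 2 be an integer. For j = 1, 2 let F_j : ℝ → ℝ be a strictly increasing continuous map such that F_j(x+1) = F_j(x) + d for all x ∈ ℝ, F_j(0) = 0, and F_j is expanding, i.e. there exists μ_j > 1 such that F_j(y) − F_j(x) ≥ μ_j·(y − x) for all x ≤ y. Then there exists a unique map T : ℝ → ℝ which is strictly increasing and surjective (hence a homeomorphism of ℝ), satisfies T(x+1) = T(x) + 1 for all x ∈ ℝ, T(0) = 0, and T ∘ F₁ = F₂ ∘ T. -/
/-!
Write a conjugacy as `T = id + u`. The inverse `G` of `F₂` is `μ₂⁻¹`-Lipschitz, so the equation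
`T ∘ F₁ = F₂ ∘ T`, i.e. `u = G ∘ (F₁ + u ∘ F₁) - id`, is the fixed point equation of a contraction
of `ℝ →ᵇ ℝ`; every conjugacy has this form because `T - id` is continuous and `1`-periodic. The
contraction preserves the closed sets of `1`-periodic `u` and of `u` with `id + u` monotone, so the
fixed point gives a monotone `T` commuting with `x ↦ x + 1`. An interval on which `T` is constant
is stretched by the iterates of `F₁` to length `≥ 1`, contradicting `T (x + 1) = T x + 1`; hence
`T` is strictly monotone.
-/

open Function Filter Set BoundedContinuousFunction
open scoped NNReal

def Expanding (μ : ℝ) (F : ℝ → ℝ) : Prop :=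
  ∀ x y, x ≤ y → μ * (y - x) ≤ F y - F x

namespace Expanding

variable {μ ν : ℝ} {F G : ℝ → ℝ}

theorem strictMono (hμ : 0 < μ) (hF : Expanding μ F) : StrictMono F := fun x y hxy => by
  nlinarith [hF x y hxy.le, mul_pos hμ (sub_pos.2 hxy)]

theorem comp (hF : Expanding μ F) (hG : Expanding ν G) (hμ : 0 ≤ μ) (hν : 0 ≤ ν) :
    Expanding (μ * ν) (F ∘ G) := fun x y hxy => by
  have hGxy := hG x y hxy
  calc μ * ν * (y - x) = μ * (ν * (y - x)) := mul_assoc _ _ _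
    _ ≤ μ * (G y - G x) := mul_le_mul_of_nonneg_left hGxy hμ
    _ ≤ F (G y) - F (G x) := hF _ _ (by nlinarith [mul_nonneg hν (sub_nonneg.2 hxy)])

theorem iterate (hμ : 0 ≤ μ) (hF : Expanding μ F) : ∀ n : ℕ, Expanding (μ ^ n) F^[n]
  | 0 => fun x y _ => by simp
  | n + 1 => by
    rw [pow_succ, iterate_succ]
    exact (hF.iterate hμ n).comp hF (pow_nonneg hμ n) hμ

theorem antilipschitzWith (hμ : 0 < μ) (hF : Expanding μ F) :
    AntilipschitzWith (Real.toNNReal μ)⁻¹ F := by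
  refine AntilipschitzWith.of_le_mul_dist fun x y => ?_
  rw [NNReal.coe_inv, Real.coe_toNNReal _ hμ.le, le_inv_mul_iff₀ hμ, Real.dist_eq, Real.dist_eq]
  rcases le_total x y with hxy | hyx
  · rw [abs_sub_comm, abs_of_nonneg (sub_nonneg.2 hxy), abs_sub_comm,
      abs_of_nonneg (sub_nonneg.2 ((hF.strictMono hμ).monotone hxy))]
    exact hF x y hxy
  · rw [abs_of_nonneg (sub_nonneg.2 hyx),
      abs_of_nonneg (sub_nonneg.2 ((hF.strictMono hμ).monotone hyx))]
    exact hF y x hyx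

theorem surjective (hμ : 0 < μ) (hF : Expanding μ F) (hc : Continuous F) : Surjective F := by
  refine hc.surjective ?_ ?_
  · refine tendsto_atTop_mono' _ ?_ (tendsto_atTop_add_const_left _ (F 0)
      (tendsto_id.const_mul_atTop hμ))
    filter_upwards [eventually_ge_atTop 0] with x hx
    simp only [id]
    linarith [hF 0 x hx]
  · refine tendsto_atBot_mono' _ ?_ (tendsto_atBot_add_const_left _ (F 0)
      (tendsto_id.const_mul_atBot hμ))
    filter_upwards [eventually_le_atBot 0] with x hx
    simp only [id]
    linarith [hF x 0 hx]

theorem eq_of_isFixedPt (hμ : 1 < μ) (hF : Expanding μ F) {a b : ℝ}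
    (ha : IsFixedPt F a) (hb : IsFixedPt F b) : a = b := by
  rcases le_total a b with hab | hba
  · nlinarith [hF a b hab, ha.eq, hb.eq]
  · nlinarith [hF b a hba, ha.eq, hb.eq]

end Expanding

theorem Monotone.strictMono_of_semiconj_expanding {T F₁ F₂ : ℝ → ℝ} {μ : ℝ} (hT : Monotone T)
    (hTper : ∀ x, T (x + 1) = T x + 1) (hconj : Semiconj T F₁ F₂) (hμ : 1 < μ)
    (hF₁ : Expanding μ F₁) : StrictMono T := by
  have hshort : ∀ x y, x ≤ y → T x = T y → y - x < 1 := fun x y _ hxy => by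
    by_contra! h
    have := hT (show x + 1 ≤ y by linarith)
    rw [hTper, ← hxy] at this
    linarith
  refine hT.strictMono_of_injective fun a b hab => ?_
  wlog hle : a ≤ b generalizing a b
  · exact (this b a hab.symm (le_of_not_ge hle)).symm
  have hpow : ∀ n : ℕ, μ ^ n * (b - a) < 1 := fun n => by
    have hFn := hF₁.iterate (by linarith) n
    refine (hFn a b hle).trans_lt (hshort _ _ ((hFn.strictMono (by positivity)).monotone hle) ?_)
    rw [(hconj.iterate_right n).eq, (hconj.iterate_right n).eq, hab]
  by_contra hne
  have hba : 0 < b - a := sub_pos.2 (lt_of_le_of_ne hle hne)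
  obtain ⟨n, hn⟩ := pow_unbounded_of_one_lt (b - a)⁻¹ hμ
  have := hpow n
  rw [← lt_div_iff₀ hba, one_div] at this
  linarith

namespace BoundedContinuousFunction

def ofPeriodic {E : Type*} [PseudoMetricSpace E] (f : C(ℝ, E)) {c : ℝ} (hf : Periodic f c)
    (hc : c ≠ 0) : ℝ →ᵇ E :=
  ⟨f, Metric.isBounded_range_iff.1 (hf.isBounded_of_continuous hc f.continuous)⟩

@[simp]
theorem ofPeriodic_apply {E : Type*} [PseudoMetricSpace E] (f : C(ℝ, E)) {c : ℝ}
    (hf : Periodic f c) (hc : c ≠ 0) (x : ℝ) : ofPeriodic f hf hc x = f x :=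
  rfl

section CompAddSub

variable {α E F : Type*} [TopologicalSpace α] [SeminormedAddCommGroup E]
  [SeminormedAddCommGroup F] {G : E → F} {K : ℝ≥0}

noncomputable def compAddSub (hG : LipschitzWith K G) (h : C(α, E)) (w : α →ᵇ E) : α →ᵇ F :=
  ofNormedAddCommGroup (fun x => G (h x + w x) - G (h x))
    ((hG.continuous.comp (h.continuous.add w.continuous)).sub (hG.continuous.comp h.continuous))
    (K * ‖w‖) fun x => by
      rw [← dist_eq_norm]
      calc dist (G (h x + w x)) (G (h x)) ≤ K * dist (h x + w x) (h x) := hG.dist_le_mul _ _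
        _ ≤ K * ‖w‖ := by
          rw [dist_self_add_left]
          exact mul_le_mul_of_nonneg_left (norm_coe_le_norm w x) K.coe_nonneg

@[simp]
theorem compAddSub_apply (hG : LipschitzWith K G) (h : C(α, E)) (w : α →ᵇ E) (x : α) :
    compAddSub hG h w x = G (h x + w x) - G (h x) :=
  rfl

theorem lipschitzWith_compAddSub (hG : LipschitzWith K G) (h : C(α, E)) :
    LipschitzWith K (compAddSub hG h) := by
  refine LipschitzWith.of_dist_le_mul fun w₁ w₂ => (dist_le (by positivity)).2 fun x => ?_
  calc dist (compAddSub hG h w₁ x) (compAddSub hG h w₂ x)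
      = dist (G (h x + w₁ x)) (G (h x + w₂ x)) := by simp only [compAddSub_apply, dist_sub_right]
    _ ≤ K * dist (h x + w₁ x) (h x + w₂ x) := hG.dist_le_mul _ _
    _ ≤ K * dist w₁ w₂ := by
      rw [dist_add_left]
      exact mul_le_mul_of_nonneg_left (dist_coe_le_dist x) K.coe_nonneg

end CompAddSub

theorem isClosed_setOf_periodic {α β : Type*} [TopologicalSpace α] [Add α] [MetricSpace β]
    (c : α) : IsClosed {u : α →ᵇ β | Periodic u c} := by
  simp only [Periodic, ofPred_forall]
  exact isClosed_iInter fun x => isClosed_eq (continuous_eval_const _) (continuous_eval_const _)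

theorem isClosed_setOf_monotone_id_add :
    IsClosed {u : ℝ →ᵇ ℝ | Monotone fun x => x + u x} :=
  isClosed_monotone.preimage (continuous_pi fun x => continuous_const.add (continuous_eval_const x))

theorem surjective_id_add (u : ℝ →ᵇ ℝ) : Surjective fun x => x + u x :=
  (continuous_id.add u.continuous).surjective
    (tendsto_atTop_add_right_of_le _ _ tendsto_id u.neg_norm_le_apply)
    (tendsto_atBot_add_right_of_ge _ _ tendsto_id u.apply_le_norm)

end BoundedContinuousFunction

theorem ContractingWith.fixedPoint_mem {α : Type*} [MetricSpace α] [CompleteSpace α] [Nonempty α]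
    {K : ℝ≥0} {f : α → α} (hf : ContractingWith K f) {s : Set α} (hs : IsClosed s) {x : α}
    (hx : x ∈ s) (hfs : MapsTo f s s) : fixedPoint f hf ∈ s :=
  hs.mem_of_tendsto (hf.tendsto_iterate_fixedPoint x)
    (Eventually.of_forall fun n => hfs.iterate n hx)

section Conjugacy

variable {F₁ F₂ G : ℝ → ℝ} {K : ℝ≥0}

/-- With `hD` witnessing that `F₁ - F₂` is bounded, this is `u ↦ G ∘ (F₁ + u ∘ F₁) - G ∘ F₂`;
for `G = F₂⁻¹` its fixed points `u` are the conjugacies `id + u` from `F₁` to `F₂`. -/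
noncomputable def conjOperator (hG : LipschitzWith K G) (h₁ : Continuous F₁)
    (h₂ : Continuous F₂) (hD : Periodic (F₁ - F₂) 1) (u : ℝ →ᵇ ℝ) : ℝ →ᵇ ℝ :=
  compAddSub hG ⟨F₂, h₂⟩
    (ofPeriodic ⟨F₁ - F₂, h₁.sub h₂⟩ hD one_ne_zero + u.compContinuous ⟨F₁, h₁⟩)

variable (hG : LipschitzWith K G) (h₁ : Continuous F₁) (h₂ : Continuous F₂)
  (hD : Periodic (F₁ - F₂) 1)

theorem conjOperator_apply (hGF : LeftInverse G F₂) (u : ℝ →ᵇ ℝ) (x : ℝ) :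
    conjOperator hG h₁ h₂ hD u x = G (F₁ x + u (F₁ x)) - x := by
  simp only [conjOperator, compAddSub_apply, ContinuousMap.coe_mk, coe_add, coe_compContinuous,
    Pi.add_apply, ofPeriodic_apply, Pi.sub_apply, comp_apply, hGF x, sub_left_inj]
  ring_nf

theorem contractingWith_conjOperator (hK : K < 1) :
    ContractingWith K (conjOperator hG h₁ h₂ hD) := by
  refine ⟨hK, ?_⟩
  have := (lipschitzWith_compAddSub hG ⟨F₂, h₂⟩).comp
    ((isometry_add_left (ofPeriodic ⟨F₁ - F₂, h₁.sub h₂⟩ hD one_ne_zero)).lipschitz.comp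
      (lipschitz_compContinuous (β := ℝ) ⟨F₁, h₁⟩))
  rwa [mul_one, mul_one] at this

theorem isFixedPt_conjOperator_iff (hGF : LeftInverse G F₂) (hFG : RightInverse G F₂)
    (u : ℝ →ᵇ ℝ) :
    IsFixedPt (conjOperator hG h₁ h₂ hD) u ↔ Semiconj (fun x => x + u x) F₁ F₂ := by
  rw [IsFixedPt, BoundedContinuousFunction.ext_iff]
  refine forall_congr' fun x => ?_
  rw [conjOperator_apply hG h₁ h₂ hD hGF, sub_eq_iff_eq_add']
  show G (F₁ x + u (F₁ x)) = x + u x ↔ F₁ x + u (F₁ x) = F₂ (x + u x)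
  exact ⟨fun h => h ▸ (hFG _).symm, fun h => h ▸ hGF _⟩

theorem mapsTo_conjOperator_periodic {d : ℕ} (hGF : LeftInverse G F₂) (hFG : RightInverse G F₂)
    (h₁per : ∀ x, F₁ (x + 1) = F₁ x + d) (h₂per : ∀ x, F₂ (x + 1) = F₂ x + d) :
    MapsTo (conjOperator hG h₁ h₂ hD) {u | Periodic u 1} {u | Periodic u 1} := by
  have hGper : ∀ y, G (y + d) = G y + 1 := fun y => by
    rw [← hFG y, ← h₂per, hGF, hGF]
  intro u (hu : Periodic u 1) x
  have hud : u (F₁ x + d) = u (F₁ x) := by simpa using hu.nat_mul d (F₁ x)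
  rw [conjOperator_apply hG h₁ h₂ hD hGF, conjOperator_apply hG h₁ h₂ hD hGF, h₁per, hud,
    add_right_comm, hGper]
  ring

theorem mapsTo_conjOperator_monotone (hGF : LeftInverse G F₂) (hF₁ : Monotone F₁)
    (hGmono : Monotone G) :
    MapsTo (conjOperator hG h₁ h₂ hD) {u | Monotone fun x => x + u x}
      {u | Monotone fun x => x + u x} := by
  intro u (hu : Monotone _)
  simp only [mem_ofPred_eq, conjOperator_apply hG h₁ h₂ hD hGF, add_sub_cancel]
  exact hGmono.comp (hu.comp hF₁)

end Conjugacy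

theorem exists_bcf_semiconj_unique {d : ℕ} {F₁ F₂ : ℝ → ℝ} {μ : ℝ} (h₁ : Continuous F₁)
    (h₁mono : Monotone F₁) (h₁per : ∀ x, F₁ (x + 1) = F₁ x + d) (h₂ : Continuous F₂)
    (h₂per : ∀ x, F₂ (x + 1) = F₂ x + d) (hμ : 1 < μ) (h₂exp : Expanding μ F₂) :
    ∃ u : ℝ →ᵇ ℝ, (Periodic u 1 ∧ Monotone (fun x => x + u x) ∧
      Semiconj (fun x => x + u x) F₁ F₂) ∧
      ∀ v : ℝ →ᵇ ℝ, Semiconj (fun x => x + v x) F₁ F₂ → v = u := by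
  have h₂mono := h₂exp.strictMono (by linarith)
  set G := invFun F₂
  have hGF : LeftInverse G F₂ := leftInverse_invFun h₂mono.injective
  have hFG : RightInverse G F₂ := rightInverse_invFun (h₂exp.surjective (by linarith) h₂)
  have hG : LipschitzWith (Real.toNNReal μ)⁻¹ G :=
    (h₂exp.antilipschitzWith (by linarith)).to_rightInverse hFG
  have hGmono : Monotone G := fun a b hab => h₂mono.le_iff_le.1 (by rwa [hFG a, hFG b])
  have hD : Periodic (F₁ - F₂) 1 := fun x => by simp [h₁per, h₂per]
  have hΦ := contractingWith_conjOperator hG h₁ h₂ hD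
    (inv_lt_one_of_one_lt₀ (Real.one_lt_toNNReal.2 hμ))
  refine ⟨ContractingWith.fixedPoint _ hΦ, ⟨?_, ?_, ?_⟩, fun v hv => ?_⟩
  · exact hΦ.fixedPoint_mem (isClosed_setOf_periodic 1)
      (show Periodic (0 : ℝ →ᵇ ℝ) 1 from fun _ => rfl)
      (mapsTo_conjOperator_periodic hG h₁ h₂ hD hGF hFG h₁per h₂per)
  · exact hΦ.fixedPoint_mem isClosed_setOf_monotone_id_add
      (show Monotone fun x => x + (0 : ℝ →ᵇ ℝ) x from fun _ _ h => by simpa using h)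
      (mapsTo_conjOperator_monotone hG h₁ h₂ hD hGF h₁mono hGmono)
  · exact (isFixedPt_conjOperator_iff hG h₁ h₂ hD hGF hFG _).1 hΦ.fixedPoint_isFixedPt
  · exact hΦ.fixedPoint_unique ((isFixedPt_conjOperator_iff hG h₁ h₂ hD hGF hFG v).2 hv)

theorem stmt8_general (d : ℕ) (F₁ F₂ : ℝ → ℝ)
    (h₁cont : Continuous F₁)
    (h₁per : ∀ x : ℝ, F₁ (x + 1) = F₁ x + d) (h₁zero : F₁ 0 = 0)
    (h₁exp : ∃ μ : ℝ, 1 < μ ∧ ∀ x y : ℝ, x ≤ y → μ * (y - x) ≤ F₁ y - F₁ x)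
    (h₂cont : Continuous F₂)
    (h₂per : ∀ x : ℝ, F₂ (x + 1) = F₂ x + d) (h₂zero : F₂ 0 = 0)
    (h₂exp : ∃ μ : ℝ, 1 < μ ∧ ∀ x y : ℝ, x ≤ y → μ * (y - x) ≤ F₂ y - F₂ x) :
    ∃! T : ℝ → ℝ,
      StrictMono T ∧ Function.Surjective T ∧
      (∀ x : ℝ, T (x + 1) = T x + 1) ∧ T 0 = 0 ∧ T ∘ F₁ = F₂ ∘ T := by
  obtain ⟨μ₁, hμ₁, hexp₁ : Expanding μ₁ F₁⟩ := h₁exp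
  obtain ⟨μ₂, hμ₂, hexp₂ : Expanding μ₂ F₂⟩ := h₂exp
  obtain ⟨u, ⟨hper, hmono, hconj⟩, huniq⟩ := exists_bcf_semiconj_unique h₁cont
    (hexp₁.strictMono (by linarith)).monotone h₁per h₂cont h₂per hμ₂ hexp₂
  have hTper : ∀ x, x + 1 + u (x + 1) = x + u x + 1 := fun x => by rw [hper x]; ring
  refine ⟨fun x => x + u x, ⟨hmono.strictMono_of_semiconj_expanding hTper hconj hμ₁ hexp₁,
    u.surjective_id_add, hTper, ?_, hconj.comp_eq⟩, ?_⟩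
  · exact hexp₂.eq_of_isFixedPt hμ₂ (by rw [IsFixedPt, ← hconj 0, h₁zero]) h₂zero
  rintro T ⟨hTmono, hTsurj, hTper', -, hTconj⟩
  have hv : Periodic (fun x => T x - x) 1 := fun x => by simp only [hTper']; ring
  set v := ofPeriodic ⟨_, (hTmono.monotone.continuous_of_surjective hTsurj).sub continuous_id⟩
    hv one_ne_zero
  have hTv : (fun x => x + v x) = T := funext fun x => by simp [v]
  rw [← hTv, huniq v (hTv ▸ semiconj_iff_comp_eq.2 hTconj)]

/-- Lifted version of the circle conjugacy lemma: if `F₁, F₂ : ℝ → ℝ` are strictly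
increasing continuous lifts of degree-`d` expanding covering maps of the circle fixing
the basepoint `0` (i.e. `Fⱼ(x+1) = Fⱼ(x) + d`, `Fⱼ(0) = 0`, and `Fⱼ` expands distances
by a factor `μⱼ > 1`), then there is a unique strictly increasing surjection `T : ℝ → ℝ`
with `T(x+1) = T(x) + 1`, `T(0) = 0` and `T ∘ F₁ = F₂ ∘ T`. -/
theorem stmt8 (d : ℕ) (hd : 2 ≤ d) (F₁ F₂ : ℝ → ℝ)
    (h₁mono : StrictMono F₁) (h₁cont : Continuous F₁)
    (h₁per : ∀ x : ℝ, F₁ (x + 1) = F₁ x + d) (h₁zero : F₁ 0 = 0)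
    (h₁exp : ∃ μ : ℝ, 1 < μ ∧ ∀ x y : ℝ, x ≤ y → μ * (y - x) ≤ F₁ y - F₁ x)
    (h₂mono : StrictMono F₂) (h₂cont : Continuous F₂)
    (h₂per : ∀ x : ℝ, F₂ (x + 1) = F₂ x + d) (h₂zero : F₂ 0 = 0)
    (h₂exp : ∃ μ : ℝ, 1 < μ ∧ ∀ x y : ℝ, x ≤ y → μ * (y - x) ≤ F₂ y - F₂ x) :
    ∃! T : ℝ → ℝ,
      StrictMono T ∧ Function.Surjective T ∧
      (∀ x : ℝ, T (x + 1) = T x + 1) ∧ T 0 = 0 ∧ T ∘ F₁ = F₂ ∘ T :=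
  stmt8_general d F₁ F₂ h₁cont h₁per h₁zero h₁exp h₂cont h₂per h₂zero h₂exp
end

section
/- Let X₀ ⊆ X ⊆ ℂ and X′₀ ⊆ X′ ⊆ ℂ. Suppose X₀ and X′₀ are compact, connected and full in ℂ (i.e. their complements ℂ \ X₀ and ℂ \ X′₀ are connected), and that their topological frontiers satisfy ∂X₀ ⊆ ∂X and ∂X′₀ ⊆ ∂X′. If φ : X → X′ is a homeomorphism (of subspaces of ℂ) satisfying φ(∂X₀) = ∂X′₀, then φ(X₀) = X′₀. -/
/-!
Suppose some `x ∈ X₀` had `φ x ∉ X₀'`. Since `φ (∂X₀) ⊆ X₀'`, every point of `X₀` that `φ` maps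
outside `X₀'` is interior to `X₀`, so by invariance of domain `φ (X₀) \ X₀'` is open. It is also
closed in the connected set `ℂ \ X₀'`, as `φ (X₀)` is compact, and it is bounded, so it is empty.
The other inclusion follows by applying this to `φ⁻¹`.

Invariance of domain in the plane is proved by Borsuk's argument: if `f` is injective on a
closed disk and some `y` close to `f c` were missing from the image, then `f - y` would have a
continuous logarithm on the disk, which would make the odd loop
`θ ↦ f (c + r e^{iθ}) - f (c - r e^{iθ})` have a continuous periodic logarithm; odd loops have none.
-/

open Set Function Metric Complex Filter Topology
open scoped Real

theorem IsPreconnected.constant_of_exp_eq {α : Type*} [TopologicalSpace α] {S : Set α}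
    (hS : IsPreconnected S) {u : α → ℂ} (hu : ContinuousOn u S) {w : ℂ}
    (hw : ∀ x ∈ S, exp (u x) = w) {x y : α} (hx : x ∈ S) (hy : y ∈ S) : u x = u y := by
  have hmaps : MapsTo (fun z => u z - u x) S (AddSubgroup.zmultiples (2 * π * I)) := by
    intro z hz
    have h1 : exp (u z - u x) = 1 := by
      rw [exp_sub, hw z hz, ← hw x hx, div_self (exp_ne_zero _)]
    obtain ⟨n, hn⟩ := exp_eq_one_iff.1 h1
    exact AddSubgroup.mem_zmultiples_iff.2 ⟨n, by rw [zsmul_eq_mul]; exact hn.symm⟩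
  have hdisc : IsDiscrete (AddSubgroup.zmultiples (2 * π * I) : Set ℂ) :=
    isDiscrete_iff_discreteTopology.2 (NormedSpace.discreteTopology_zmultiples _)
  have := hS.constant_of_mapsTo hdisc (hu.sub continuousOn_const) hmaps hx hy
  simpa [eq_comm, sub_eq_zero] using this

theorem IsPreconnected.sub_eq_of_exp_eq {α : Type*} [TopologicalSpace α] {S : Set α}
    (hS : IsPreconnected S) {L₁ L₂ : α → ℂ} (h₁ : ContinuousOn L₁ S) (h₂ : ContinuousOn L₂ S)
    (h : ∀ x ∈ S, exp (L₁ x) = exp (L₂ x)) {x y : α} (hx : x ∈ S) (hy : y ∈ S) :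
    L₁ x - L₂ x = L₁ y - L₂ y :=
  hS.constant_of_exp_eq (u := fun x => L₁ x - L₂ x) (h₁.sub h₂) (w := 1)
    (fun z hz => by rw [exp_sub, h z hz, div_self (exp_ne_zero _)]) hx hy

theorem Convex.exists_continuousOn_exp_eq {E : Type*} [NormedAddCommGroup E] [NormedSpace ℝ E]
    {s : Set E} (hs : Convex ℝ s) {g : E → ℂ} (hg : ContinuousOn g s) (hg0 : ∀ x ∈ s, g x ≠ 0) :
    ∃ L : E → ℂ, ContinuousOn L s ∧ ∀ x ∈ s, exp (L x) = g x := by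
  rcases s.eq_empty_or_nonempty with rfl | ⟨x₀, hx₀⟩
  · exact ⟨0, continuousOn_empty _, fun _ h => h.elim⟩
  have := hs.contractibleSpace ⟨x₀, hx₀⟩
  have := hs.locallyPathConnectedSpace
  obtain ⟨F, ⟨-, hF⟩, -⟩ := isCoveringMapOn_exp.existsUnique_continuousMap_lifts
    ⟨s.domRestrict g, hg.domRestrict⟩ (a₀ := ⟨x₀, hx₀⟩) (exp_log (hg0 x₀ hx₀)) fun x => hg0 x x.2
  refine ⟨Subtype.val.extend F 0, ?_, fun x hx => ?_⟩
  · rw [continuousOn_iff_continuous_domRestrict]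
    convert F.continuous using 1
    funext x
    exact Subtype.val_injective.extend_apply F 0 x
  · rw [Subtype.val_injective.extend_apply F 0 ⟨x, hx⟩]
    exact congrFun hF ⟨x, hx⟩

/-- For a `T`-periodic `g`, i.e. a loop in `ℂ \ {0}`, this says that `g` has winding number zero
about the origin. -/
def HasPeriodicLog (g : ℝ → ℂ) (T : ℝ) : Prop :=
  ∃ ℓ : ℝ → ℂ, Continuous ℓ ∧ Periodic ℓ T ∧ ∀ x, exp (ℓ x) = g x

theorem HasPeriodicLog.div {g₁ g₂ : ℝ → ℂ} {T : ℝ} (h₁ : HasPeriodicLog g₁ T)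
    (h₂ : HasPeriodicLog g₂ T) : HasPeriodicLog (g₁ / g₂) T := by
  obtain ⟨ℓ₁, hc₁, hp₁, he₁⟩ := h₁
  obtain ⟨ℓ₂, hc₂, hp₂, he₂⟩ := h₂
  exact ⟨ℓ₁ - ℓ₂, hc₁.sub hc₂, hp₁.sub hp₂, fun x => by simp [exp_sub, he₁, he₂]⟩

theorem Function.Periodic.hasPeriodicLog_of_mem_slitPlane {g : ℝ → ℂ} {T : ℝ}
    (hper : Periodic g T) (hg : Continuous g) (hs : ∀ x, g x ∈ slitPlane) :
    HasPeriodicLog g T :=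
  ⟨fun x => log (g x), hg.clog hs, fun x => by simp only [hper x],
    fun x => exp_log (slitPlane_ne_zero (hs x))⟩

theorem Convex.hasPeriodicLog_comp {E : Type*} [NormedAddCommGroup E] [NormedSpace ℝ E]
    {s : Set E} (hs : Convex ℝ s) {g : E → ℂ} (hg : ContinuousOn g s) (hg0 : ∀ x ∈ s, g x ≠ 0)
    {γ : ℝ → E} {T : ℝ} (hγ : Continuous γ) (hper : Periodic γ T) (hγs : ∀ x, γ x ∈ s) :
    HasPeriodicLog (g ∘ γ) T := by
  obtain ⟨L, hL, hexp⟩ := hs.exists_continuousOn_exp_eq hg hg0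
  exact ⟨L ∘ γ, hL.comp_continuous hγ hγs, fun x => by simp [hper x], fun x => hexp _ (hγs x)⟩

theorem Function.Antiperiodic.not_hasPeriodicLog {h : ℝ → ℂ} {T : ℝ} (hh : Antiperiodic h T) :
    ¬ HasPeriodicLog h (2 * T) := by
  rintro ⟨ℓ, hℓ, hper, hexp⟩
  have hshift : ∀ x, exp (ℓ (x + T) - ℓ x) = -1 := fun x => by
    rw [exp_sub, hexp, hexp, hh x, neg_div, div_self (hexp x ▸ exp_ne_zero _)]
  have hconst := isPreconnected_univ.constant_of_exp_eq (u := fun x => ℓ (x + T) - ℓ x)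
    ((hℓ.comp (continuous_add_const T)).sub hℓ).continuousOn (fun x _ => hshift x)
    (mem_univ T) (mem_univ 0)
  have hloop : ℓ (T + T) = ℓ 0 := by simpa [two_mul] using hper 0
  -- the shift by `T` is constant, and two shifts make a full period
  have hzero : ℓ (0 + T) - ℓ 0 = 0 := by
    rw [hloop, zero_add] at hconst
    rw [zero_add]
    linear_combination -hconst / 2
  have := hshift 0
  rw [hzero, exp_zero] at this
  norm_num at this

theorem HasPeriodicLog.of_homotopy {H : ℝ × ℝ → ℂ} {T : ℝ}
    (hH : ContinuousOn H (Icc 0 1 ×ˢ univ)) (hH0 : ∀ p ∈ Icc (0 : ℝ) 1 ×ˢ univ, H p ≠ 0)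
    (hper : ∀ s ∈ Icc (0 : ℝ) 1, Periodic (fun x => H (s, x)) T)
    (h₀ : HasPeriodicLog (fun x => H (0, x)) T) : HasPeriodicLog (fun x => H (1, x)) T := by
  have hQ : Convex ℝ (Icc (0 : ℝ) 1 ×ˢ (univ : Set ℝ)) := (convex_Icc 0 1).prod convex_univ
  obtain ⟨L, hL, hexp⟩ := hQ.exists_continuousOn_exp_eq hH hH0
  have hmem : ∀ s ∈ Icc (0 : ℝ) 1, ∀ x : ℝ, (s, x) ∈ Icc (0 : ℝ) 1 ×ˢ univ :=
    fun s hs x => ⟨hs, mem_univ x⟩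
  have hslice : ∀ s ∈ Icc (0 : ℝ) 1, Continuous fun x => L (s, x) := fun s hs =>
    hL.comp_continuous (by fun_prop) (hmem s hs)
  have h0 : (0 : ℝ) ∈ Icc (0 : ℝ) 1 := left_mem_Icc.2 zero_le_one
  have h1 : (1 : ℝ) ∈ Icc (0 : ℝ) 1 := right_mem_Icc.2 zero_le_one
  have hshift : ∀ p ∈ Icc (0 : ℝ) 1 ×ˢ univ,
      L (p.1, p.2 + T) - L p = L (0, 0 + T) - L (0, 0) := fun p hp =>
    hQ.isPreconnected.sub_eq_of_exp_eq (L₁ := fun p => L (p.1, p.2 + T))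
      (hL.comp (by fun_prop) fun q hq => hmem q.1 hq.1 _) hL
      (fun q hq => by rw [hexp _ (hmem q.1 hq.1 _), hexp q hq]; exact hper q.1 hq.1 q.2)
      hp (hmem 0 h0 0)
  obtain ⟨ℓ₀, hℓ₀, hℓ₀per, hℓ₀exp⟩ := h₀
  have hshift0 : L (0, 0 + T) - L (0, 0) = 0 := by
    have := isPreconnected_univ.sub_eq_of_exp_eq (L₁ := fun x => L (0, x))
      (hslice 0 h0).continuousOn hℓ₀.continuousOn
      (fun x _ => by rw [hexp _ (hmem 0 h0 x), hℓ₀exp]) (mem_univ (0 + T)) (mem_univ 0)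
    linear_combination this + hℓ₀per 0
  refine ⟨fun x => L (1, x), hslice 1 h1, fun x => ?_, fun x => hexp _ (hmem 1 h1 x)⟩
  linear_combination hshift (1, x) (hmem 1 h1 x) + hshift0

section InvarianceOfDomain

variable {f : ℂ → ℂ} {c : ℂ} {r : ℝ}

theorem hasPeriodicLog_circleMap_sub_of_notMem_image (hr : 0 ≤ r)
    (hf : ContinuousOn f (closedBall c r)) {y : ℂ} (hy : y ∉ f '' closedBall c r)
    (hclose : ∀ θ, dist y (f c) < dist (f (circleMap c r θ)) (f c)) :
    HasPeriodicLog (fun θ => f (circleMap c r θ) - f c) (2 * π) := by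
  have hγ : ∀ θ, circleMap c r θ ∈ closedBall c r := circleMap_mem_closedBall c hr
  have hcont : Continuous fun θ => f (circleMap c r θ) :=
    hf.comp_continuous (continuous_circleMap c r) hγ
  have hne : ∀ θ, f (circleMap c r θ) - f c ≠ 0 := fun θ h => by
    simpa [dist_eq, h] using (dist_nonneg.trans_lt (hclose θ))
  have hne' : ∀ θ, f (circleMap c r θ) - y ≠ 0 := fun θ h =>
    hy ⟨_, hγ θ, sub_eq_zero.1 h⟩
  have h₁ : HasPeriodicLog (fun θ => f (circleMap c r θ) - y) (2 * π) :=
    (convex_closedBall c r).hasPeriodicLog_comp (hf.sub continuousOn_const)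
      (fun z hz h => hy ⟨z, hz, sub_eq_zero.1 h⟩) (continuous_circleMap c r)
      (periodic_circleMap c r) hγ
  have h₂ : HasPeriodicLog
      (fun θ => (f (circleMap c r θ) - y) / (f (circleMap c r θ) - f c)) (2 * π) := by
    refine Periodic.hasPeriodicLog_of_mem_slitPlane (fun θ => by simp [periodic_circleMap c r θ])
      ((hcont.sub continuous_const).div (hcont.sub continuous_const) hne) fun θ => ?_
    have hsplit : (f (circleMap c r θ) - y) / (f (circleMap c r θ) - f c)
        = 1 + (f c - y) / (f (circleMap c r θ) - f c) := by
      field_simp [hne θ]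
      ring
    rw [hsplit]
    refine mem_slitPlane_of_norm_lt_one ?_
    rw [norm_div, div_lt_one (norm_pos_iff.2 (hne θ)), ← dist_eq, ← dist_eq, dist_comm]
    exact hclose θ
  convert h₁.div h₂ using 1
  funext θ
  simp only [Pi.div_apply]
  field_simp [hne θ, hne' θ]

theorem hasPeriodicLog_circleMap_sub_neg_radius (hr : 0 < r)
    (hf : ContinuousOn f (closedBall c r)) (hinj : InjOn f (closedBall c r))
    (h₀ : HasPeriodicLog (fun θ => f (circleMap c r θ) - f c) (2 * π)) :
    HasPeriodicLog (fun θ => f (circleMap c r θ) - f (circleMap c (-r) θ)) (2 * π) := by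
  set H : ℝ × ℝ → ℂ := fun p => f (circleMap c r p.2) - f (circleMap c (-(p.1 * r)) p.2)
  have hmaps : ∀ p ∈ Icc (0 : ℝ) 1 ×ˢ (univ : Set ℝ),
      circleMap c (-(p.1 * r)) p.2 ∈ closedBall c r := fun p hp => by
    have := circleMap_mem_sphere' c (-(p.1 * r)) p.2
    rw [mem_sphere] at this
    rw [mem_closedBall, this, abs_neg, abs_of_nonneg (mul_nonneg hp.1.1 hr.le)]
    nlinarith [hp.1.2]
  have hHcont : ContinuousOn H (Icc 0 1 ×ˢ univ) := by
    refine ContinuousOn.sub ?_ (hf.comp (by fun_prop) hmaps)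
    exact (hf.comp_continuous (continuous_circleMap c r)
      (circleMap_mem_closedBall c hr.le)).comp continuous_snd |>.continuousOn
  have hH0 : ∀ p ∈ Icc (0 : ℝ) 1 ×ˢ univ, H p ≠ 0 := fun p hp h => by
    have := hinj (circleMap_mem_closedBall c hr.le p.2) (hmaps p hp) (sub_eq_zero.1 h)
    have hzero : ((r + p.1 * r : ℝ) : ℂ) * exp (p.2 * I) = 0 := by
      simp only [circleMap] at this
      push_cast at this ⊢
      linear_combination this
    have hpos : 0 < r + p.1 * r := by nlinarith [hp.1.1]
    rcases mul_eq_zero.1 hzero with h | h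
    · exact hpos.ne' (by exact_mod_cast h)
    · exact exp_ne_zero _ h
  have hper : ∀ s ∈ Icc (0 : ℝ) 1, Periodic (fun x => H (s, x)) (2 * π) := fun s _ θ => by
    simp only [H, periodic_circleMap _ _ θ]
  simpa [H] using HasPeriodicLog.of_homotopy hHcont hH0 hper (by simpa [H, circleMap_zero_radius])

theorem image_closedBall_mem_nhds (hr : 0 < r) (hf : ContinuousOn f (closedBall c r))
    (hinj : InjOn f (closedBall c r)) : f '' closedBall c r ∈ 𝓝 (f c) := by
  have hsphere : IsCompact (f '' sphere c r) :=
    (isCompact_sphere c r).image_of_continuousOn (hf.mono sphere_subset_closedBall)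
  have hc : f c ∉ f '' sphere c r := by
    rintro ⟨z, hz, hfz⟩
    obtain rfl := hinj (sphere_subset_closedBall hz) (mem_closedBall_self hr.le) hfz
    simp [hr.ne] at hz
  obtain ⟨ρ, hρ, hball⟩ := Metric.mem_nhds_iff.1 (hsphere.isClosed.isOpen_compl.mem_nhds hc)
  refine Metric.mem_nhds_iff.2 ⟨ρ, hρ, fun y hy => ?_⟩
  by_contra hy'
  have hclose : ∀ θ, dist y (f c) < dist (f (circleMap c r θ)) (f c) := fun θ =>
    lt_of_lt_of_le hy <| not_lt.1 fun h =>
      hball h ⟨circleMap c r θ, circleMap_mem_sphere c hr.le θ, rfl⟩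
  have hodd : Antiperiodic (fun θ => f (circleMap c r θ) - f (circleMap c (-r) θ)) π := by
    intro θ
    have e₂ : circleMap c (-r) (θ + π) = circleMap c r θ := by
      rw [circleMap_neg_radius, add_assoc, ← two_mul, periodic_circleMap]
    simp only [← circleMap_neg_radius, e₂]
    ring
  exact hodd.not_hasPeriodicLog <| hasPeriodicLog_circleMap_sub_neg_radius hr hf hinj <|
    hasPeriodicLog_circleMap_sub_of_notMem_image hr.le hf hy' hclose

theorem isOpen_image_of_continuousOn_injOn {U : Set ℂ} (hU : IsOpen U) (hf : ContinuousOn f U)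
    (hinj : InjOn f U) : IsOpen (f '' U) := by
  rw [isOpen_iff_mem_nhds]
  rintro _ ⟨z, hz, rfl⟩
  obtain ⟨r, hr, hball⟩ := nhds_basis_closedBall.mem_iff.1 (hU.mem_nhds hz)
  exact mem_of_superset (image_closedBall_mem_nhds hr (hf.mono hball) (hinj.mono hball))
    (image_mono hball)

end InvarianceOfDomain

theorem isOpen_image_preimage_val_of_injective {X U : Set ℂ} {g : X → ℂ} (hg : Continuous g)
    (hinj : Injective g) (hU : IsOpen U) (hUX : U ⊆ X) : IsOpen (g '' (Subtype.val ⁻¹' U)) := by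
  set F : ℂ → ℂ := Subtype.val.extend g 0
  have hF : ∀ x : X, F x = g x := Subtype.val_injective.extend_apply g 0
  have himage : F '' U = g '' (Subtype.val ⁻¹' U) := by
    ext w
    constructor
    · rintro ⟨z, hz, rfl⟩
      exact ⟨⟨z, hUX hz⟩, hz, (hF _).symm⟩
    · rintro ⟨x, hx, rfl⟩
      exact ⟨x, hx, hF x⟩
  rw [← himage]
  refine isOpen_image_of_continuousOn_injOn hU ?_ fun a ha b hb hab => ?_
  · rw [continuousOn_iff_continuous_domRestrict]
    convert hg.comp (continuous_inclusion hUX) using 1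
    funext z
    exact hF (inclusion hUX z)
  · rw [hF ⟨a, hUX ha⟩, hF ⟨b, hUX hb⟩] at hab
    exact congrArg Subtype.val (hinj hab)

theorem subset_of_isOpen_diff {E : Type*} [NormedAddCommGroup E] [NormedSpace ℝ E] [Nontrivial E]
    {K C : Set E} (hK : IsCompact K) (hC : Bornology.IsBounded C) (hCc : IsPreconnected Cᶜ)
    (hopen : IsOpen (K \ C)) : K ⊆ C := by
  by_contra hKC
  obtain ⟨x, hxK, hxC⟩ := not_subset.1 hKC
  obtain ⟨z, hz⟩ : (K ∪ C)ᶜ.Nonempty := by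
    rw [nonempty_compl]
    exact fun h => NormedSpace.unbounded_univ ℝ E (h ▸ hK.isBounded.union hC)
  rw [compl_union] at hz
  obtain ⟨w, -, ⟨hwK, -⟩, hwK'⟩ := hCc (K \ C) Kᶜ hopen hK.isClosed.isOpen_compl
    (fun w hw => by by_cases hwK : w ∈ K <;> simp_all) ⟨x, hxC, hxK, hxC⟩ ⟨z, hz.2, hz.1⟩
  exact hwK' hwK

theorem image_preimage_val_subset_of_frontier {X K C : Set ℂ} {g : X → ℂ} (hg : Continuous g)
    (hinj : Injective g) (hKX : K ⊆ X) (hK : IsCompact K) (hC : IsCompact C)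
    (hCc : IsPreconnected Cᶜ) (hfr : ∀ x : X, (x : ℂ) ∈ frontier K → g x ∈ C) :
    g '' (Subtype.val ⁻¹' K) ⊆ C := by
  have himage_compact : IsCompact (g '' (Subtype.val ⁻¹' K)) := by
    refine IsCompact.image ?_ hg
    rwa [Subtype.isCompact_iff, image_preimage_eq_inter_range, Subtype.range_coe,
      inter_eq_left.2 hKX]
  obtain ⟨V, hV, hVg⟩ := isOpen_induced_iff.1 (hC.isClosed.isOpen_compl.preimage hg)
  -- a point of `K` mapped outside `C` is not on `∂K`, hence interior to `K`
  have hdiff : g '' (Subtype.val ⁻¹' K) \ C = g '' (Subtype.val ⁻¹' (interior K ∩ V)) := by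
    ext w
    constructor
    · rintro ⟨⟨x, hxK, rfl⟩, hxC⟩
      have hxV : x ∈ Subtype.val ⁻¹' V := hVg ▸ hxC
      have hxint : (x : ℂ) ∈ interior K := by
        by_contra h
        exact hxC (hfr x ⟨subset_closure hxK, h⟩)
      exact ⟨x, ⟨hxint, hxV⟩, rfl⟩
    · rintro ⟨x, ⟨hxint, hxV⟩, rfl⟩
      exact ⟨⟨x, (interior_subset hxint : (x : ℂ) ∈ K), rfl⟩, (hVg ▸ hxV : x ∈ g ⁻¹' Cᶜ)⟩
  refine subset_of_isOpen_diff himage_compact hC.isBounded hCc (hdiff ▸ ?_)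
  exact isOpen_image_preimage_val_of_injective hg hinj (isOpen_interior.inter hV)
    (inter_subset_left.trans (interior_subset.trans hKX))

theorem stmt10_general (X₀ X X₀' X' : Set ℂ)
    (hX₀X : X₀ ⊆ X) (hX₀'X' : X₀' ⊆ X')
    (hcomp : IsCompact X₀) (hfull : IsConnected X₀ᶜ)
    (hcomp' : IsCompact X₀') (hfull' : IsConnected X₀'ᶜ)
    (φ : X ≃ₜ X')
    (hφ : (fun x : X => (φ x : ℂ)) '' {x : X | (x : ℂ) ∈ frontier X₀} = frontier X₀') :
    (fun x : X => (φ x : ℂ)) '' {x : X | (x : ℂ) ∈ X₀} = X₀' := by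
  refine Subset.antisymm ?_ fun w hw => ?_
  · refine image_preimage_val_subset_of_frontier (continuous_subtype_val.comp φ.continuous)
      (Subtype.val_injective.comp φ.injective) hX₀X hcomp hcomp' hfull'.isPreconnected
      fun x hx => hcomp'.isClosed.frontier_subset ?_
    exact hφ ▸ mem_image_of_mem _ hx
  have hsymm := image_preimage_val_subset_of_frontier (g := fun y : X' => (φ.symm y : ℂ))
    (continuous_subtype_val.comp φ.symm.continuous) (Subtype.val_injective.comp φ.symm.injective)
    hX₀'X' hcomp' hcomp hfull.isPreconnected (fun y hy => ?_) ⟨⟨w, hX₀'X' hw⟩, hw, rfl⟩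
  · exact ⟨φ.symm ⟨w, hX₀'X' hw⟩, hsymm, by simp⟩
  · obtain ⟨x, hx, hxy⟩ := hφ ▸ hy
    rw [← Subtype.ext hxy, φ.symm_apply_apply]
    exact hcomp.isClosed.frontier_subset hx

/-- Topological lemma: if `X₀ ⊆ X ⊆ ℂ` and `X₀' ⊆ X' ⊆ ℂ` with `X₀`, `X₀'` compact,
connected and full (complement connected), `∂X₀ ⊆ ∂X`, `∂X₀' ⊆ ∂X'`, and
`φ : X → X'` is a homeomorphism with `φ(∂X₀) = ∂X₀'`, then `φ(X₀) = X₀'`. -/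
theorem stmt10 (X₀ X X₀' X' : Set ℂ)
    (hX₀X : X₀ ⊆ X) (hX₀'X' : X₀' ⊆ X')
    (hcomp : IsCompact X₀) (hconn : IsConnected X₀) (hfull : IsConnected X₀ᶜ)
    (hcomp' : IsCompact X₀') (hconn' : IsConnected X₀') (hfull' : IsConnected X₀'ᶜ)
    (hfr : frontier X₀ ⊆ frontier X) (hfr' : frontier X₀' ⊆ frontier X')
    (φ : X ≃ₜ X')
    (hφ : (fun x : X => (φ x : ℂ)) '' {x : X | (x : ℂ) ∈ frontier X₀} = frontier X₀') :
    (fun x : X => (φ x : ℂ)) '' {x : X | (x : ℂ) ∈ X₀} = X₀' :=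
  stmt10_general X₀ X X₀' X' hX₀X hX₀'X' hcomp hfull hcomp' hfull' φ hφ
end
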